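/- Let n ≥ 1 and let f = Σ_{∅≠F⊆{0,...,n-1}} α_F ∏_{m∈F} u_m with α_F ∈ ℂ. Then the Lipschitz seminorm of f with respect to the Cantor metric equals max over pairs x ≠ y in 𝒞_n of 2^(k_{x,y}+1) · |Σ_{F∈σ_{x,y}} ε_{F,x,y} α_F|, where k_{x,y} is the first index of disagreement of x and y, σ_{x,y} = {F : (∏_{m∈F}u_m)(x) ≠ (∏_{m∈F}u_m)(y)}, and ε_{F,x,y} ∈ {±1} is the sign of (∏_{m∈F}u_m)(x) - (∏_{m∈F}u_m)(y). -/

import Mathlib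

open scoped ENNReal

abbrev Cantor : Type := ℕ → Fin 2

noncomputable def u (n : ℕ) (x : Cantor) : ℂ := 2 * ((x n : ℕ) : ℂ) - 1

noncomputable def firstDiff (x y : Cantor) (h : x ≠ y) : ℕ :=
  Nat.find (Function.ne_iff.mp h)

open Classical in
noncomputable def dC (x y : Cantor) : ℝ≥0∞ :=
  if h : x = y then 0 else 2⁻¹ ^ firstDiff x y h

noncomputable def LipC (f : Cantor → ℂ) : ℝ≥0∞ :=
  ⨆ (x : Cantor) (y : Cantor) (_ : x ≠ y),
    ENNReal.ofReal ‖f x - f y‖ / dC x y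

def CantorN (n : ℕ) : Set Cantor := {x | ∀ m, n ≤ m → x m = 0}

/-!
The value of `f` at `x` only depends on the first `n` coordinates of `x`, so replacing a pair
`x ≠ y` by its truncation to `𝒞_n` changes neither `f x - f y` nor, when the truncations still
differ, the first index of disagreement; the supremum defining the Lipschitz seminorm can thus be
taken over `𝒞_n`. On each pair, the terms `α_F ∏_{m∈F} u_m` with equal values at `x` and `y`
cancel in `f x - f y`, and the others contribute `2 ε_{F,x,y} α_F`, while `1 / d(x, y) = 2^k`.
-/

namespace Cantor

def trunc (n : ℕ) (x : Cantor) : Cantor := fun m => if m < n then x m else 0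

lemma trunc_mem_cantorN (n : ℕ) (x : Cantor) : trunc n x ∈ CantorN n := fun m hm => by
  simp [trunc, Nat.not_lt.mpr hm]

lemma firstDiff_spec {x y : Cantor} (h : x ≠ y) : x (firstDiff x y h) ≠ y (firstDiff x y h) :=
  Nat.find_spec (Function.ne_iff.mp h)

lemma firstDiff_trunc {n : ℕ} {x y : Cantor} (h : x ≠ y) (ht : trunc n x ≠ trunc n y) :
    firstDiff (trunc n x) (trunc n y) ht = firstDiff x y h := by
  set k := firstDiff (trunc n x) (trunc n y) ht
  have hk : trunc n x k ≠ trunc n y k := firstDiff_spec ht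
  have hkn : k < n := by
    by_contra hge
    simp [trunc, hge] at hk
  have hxy : x k ≠ y k := by simpa [trunc, hkn] using hk
  have hle : firstDiff x y h ≤ k := Nat.find_le hxy
  have hxy' : trunc n x (firstDiff x y h) ≠ trunc n y (firstDiff x y h) := by
    simpa [trunc, hle.trans_lt hkn] using firstDiff_spec h
  exact le_antisymm (Nat.find_le hxy') hle

lemma dC_trunc {n : ℕ} {x y : Cantor} (ht : trunc n x ≠ trunc n y) :
    dC (trunc n x) (trunc n y) = dC x y := by
  have h : x ≠ y := fun e => ht (e ▸ rfl)
  rw [dC, dC, dif_neg ht, dif_neg h, firstDiff_trunc h ht]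

lemma div_dC {x y : Cantor} (h : x ≠ y) (a : ℝ≥0∞) : a / dC x y = a * 2 ^ firstDiff x y h := by
  rw [dC, dif_neg h, div_eq_mul_inv, ← ENNReal.inv_pow, inv_inv]

lemma prod_u_trunc {n : ℕ} {F : Finset ℕ} (hF : F ⊆ Finset.range n) (x : Cantor) :
    ∏ m ∈ F, u m (trunc n x) = ∏ m ∈ F, u m x :=
  Finset.prod_congr rfl fun m hm => by simp [u, trunc, Finset.mem_range.mp (hF hm)]

lemma lipC_eq_iSup_cantorN {n : ℕ} {f : Cantor → ℂ} (hf : ∀ x, f (trunc n x) = f x) :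
    LipC f = ⨆ (x : Cantor) (_ : x ∈ CantorN n) (y : Cantor) (_ : y ∈ CantorN n) (_ : x ≠ y),
      ENNReal.ofReal ‖f x - f y‖ / dC x y := by
  apply le_antisymm
  · refine iSup₂_le fun x y => iSup_le fun _ => ?_
    by_cases ht : trunc n x = trunc n y
    · simp [← hf x, ← hf y, ht]
    · rw [← hf x, ← hf y, ← dC_trunc ht]
      exact le_iSup₂_of_le (trunc n x) (trunc_mem_cantorN n x) <|
        le_iSup₂_of_le (trunc n y) (trunc_mem_cantorN n y) <| le_iSup_of_le ht le_rfl
  · exact iSup₂_le fun x _ => iSup₂_le fun y _ => iSup_le fun h =>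
      le_iSup₂_of_le x y <| le_iSup_of_le h le_rfl

end Cantor

open Cantor

lemma Finset.sum_mul_sub_sum_mul_eq_sum_filter_ne {ι R : Type*} [CommRing R] [DecidableEq R]
    (s : Finset ι) (c a b : ι → R) :
    ∑ i ∈ s, c i * a i - ∑ i ∈ s, c i * b i = ∑ i ∈ s with a i ≠ b i, (a i - b i) * c i := by
  rw [← Finset.sum_sub_distrib, Finset.sum_filter_of_ne (p := fun i => a i ≠ b i)
    fun i _ hi hab => hi (by rw [hab, sub_self, zero_mul])]
  exact Finset.sum_congr rfl fun i _ => by ring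

open Classical in
theorem lip_formula_general (n : ℕ) (α : Finset ℕ → ℂ) :
    LipC (fun x => ∑ F ∈ (Finset.range n).powerset.filter (fun F => F.Nonempty),
        α F * ∏ m ∈ F, u m x)
      = ⨆ (x : Cantor) (_ : x ∈ CantorN n) (y : Cantor) (_ : y ∈ CantorN n) (h : x ≠ y),
          ENNReal.ofReal ((2 : ℝ) ^ (firstDiff x y h + 1) *
            ‖∑ F ∈ (Finset.range n).powerset.filter
                (fun F => F.Nonempty ∧ (∏ m ∈ F, u m x) ≠ ∏ m ∈ F, u m y),
              (((∏ m ∈ F, u m x) - ∏ m ∈ F, u m y) / 2) * α F‖) := by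
  rw [lipC_eq_iSup_cantorN fun x => Finset.sum_congr rfl fun F hF => by
    rw [prod_u_trunc (Finset.mem_powerset.mp (Finset.mem_filter.mp hF).1)]]
  refine iSup_congr fun x => iSup_congr fun _ => iSup_congr fun y => iSup_congr fun _ =>
    iSup_congr fun h => ?_
  rw [div_dC h, Finset.sum_mul_sub_sum_mul_eq_sum_filter_ne, Finset.filter_filter]
  simp_rw [div_mul_eq_mul_div, ← Finset.sum_div, norm_div, Complex.norm_two]
  rw [pow_succ, mul_assoc, mul_div_cancel₀ _ two_ne_zero, mul_comm,
    ENNReal.ofReal_mul (by positivity), ENNReal.ofReal_pow zero_le_two, ENNReal.ofReal_ofNat]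

open Classical in
theorem lip_formula (n : ℕ) (hn : 1 ≤ n) (α : Finset ℕ → ℂ) :
    LipC (fun x => ∑ F ∈ (Finset.range n).powerset.filter (fun F => F.Nonempty),
        α F * ∏ m ∈ F, u m x)
      = ⨆ (x : Cantor) (_ : x ∈ CantorN n) (y : Cantor) (_ : y ∈ CantorN n) (h : x ≠ y),
          ENNReal.ofReal ((2 : ℝ) ^ (firstDiff x y h + 1) *
            ‖∑ F ∈ (Finset.range n).powerset.filter
                (fun F => F.Nonempty ∧ (∏ m ∈ F, u m x) ≠ ∏ m ∈ F, u m y),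
              (((∏ m ∈ F, u m x) - ∏ m ∈ F, u m y) / 2) * α F‖) :=
  lip_formula_general n α
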